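/- For c > 0 let Q_c(s) = √c · sech(√c s). Then Q_c satisfies on ℝ: (i) Q_c″ − c Q_c + 2Q_c³ = 0; (ii) the 5th-order stationary equation Q_c⁽⁴⁾ − c² Q_c + f₅(Q_c) = 0; (iii) the 7th-order stationary equation Q_c⁽⁶⁾ − c³ Q_c + f₇(Q_c) = 0; (iv) the 9th-order stationary equation Q_c⁽⁸⁾ − c⁴ Q_c + f₉(Q_c) = 0. -/

import Mathlib

noncomputable section

open Real

/-- The soliton profile `Q_c(s) = √c · sech(√c s)`. -/
def Q (c : ℝ) (s : ℝ) : ℝ := Real.sqrt c / Real.cosh (Real.sqrt c * s)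

/-- The 5th order mKdV nonlinearity `f₅`. -/
def f5 (u : ℝ → ℝ) (x : ℝ) : ℝ :=
  10 * u x * (deriv u x)^2 + 10 * (u x)^2 * iteratedDeriv 2 u x + 6 * (u x)^5

/-- The 7th order mKdV nonlinearity `f₇`. -/
def f7 (u : ℝ → ℝ) (x : ℝ) : ℝ :=
  14 * (u x)^2 * iteratedDeriv 4 u x
  + 56 * u x * deriv u x * iteratedDeriv 3 u x
  + 42 * u x * (iteratedDeriv 2 u x)^2
  + 70 * (deriv u x)^2 * iteratedDeriv 2 u x
  + 70 * (u x)^4 * iteratedDeriv 2 u x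
  + 140 * (u x)^3 * (deriv u x)^2 + 20 * (u x)^7

/-- The 9th order mKdV nonlinearity `f₉`. -/
def f9 (u : ℝ → ℝ) (x : ℝ) : ℝ :=
  18*(u x)^2 * iteratedDeriv 6 u x + 108 * u x * deriv u x * iteratedDeriv 5 u x
  + 228 * u x * iteratedDeriv 2 u x * iteratedDeriv 4 u x
  + 210 * (deriv u x)^2 * iteratedDeriv 4 u x
  + 126 * (u x)^4 * iteratedDeriv 4 u x
  + 138 * u x * (iteratedDeriv 3 u x)^2
  + 756 * deriv u x * iteratedDeriv 2 u x * iteratedDeriv 3 u x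
  + 1008 * (u x)^3 * deriv u x * iteratedDeriv 3 u x
  + 182 * (iteratedDeriv 2 u x)^3 + 756 * (u x)^3 * (iteratedDeriv 2 u x)^2
  + 3108 * (u x)^2 * (deriv u x)^2 * iteratedDeriv 2 u x
  + 420 * (u x)^6 * iteratedDeriv 2 u x
  + 798 * u x * (deriv u x)^4 + 1260 * (u x)^5 * (deriv u x)^2 + 70 * (u x)^9

/-- Auxiliary: `sech(a s)`. -/
def Vs (a s : ℝ) : ℝ := (Real.cosh (a * s))⁻¹

/-- Auxiliary: `tanh(a s)`. -/
def Ts (a s : ℝ) : ℝ := Real.tanh (a * s)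

lemma cosh_as_ne (a s : ℝ) : Real.cosh (a * s) ≠ 0 := (Real.cosh_pos (x := a * s)).ne'

lemma hasDerivAt_cosh_as (a s : ℝ) :
    HasDerivAt (fun s => Real.cosh (a * s)) (a * Real.sinh (a * s)) s := by
  simpa [mul_comm] using ((hasDerivAt_id s).const_mul a).cosh

lemma hasDerivAt_sinh_as (a s : ℝ) :
    HasDerivAt (fun s => Real.sinh (a * s)) (a * Real.cosh (a * s)) s := by
  simpa [mul_comm] using ((hasDerivAt_id s).const_mul a).sinh

lemma hV (a s : ℝ) : HasDerivAt (Vs a) (-(a * Ts a s * Vs a s)) s := by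
  have h := (hasDerivAt_cosh_as a s).inv (cosh_as_ne a s)
  have : -(a * Real.sinh (a * s)) / Real.cosh (a * s) ^ 2
      = -(a * Ts a s * Vs a s) := by
    rw [Ts, Vs, Real.tanh_eq_sinh_div_cosh]
    field_simp
  rw [this] at h
  exact h

lemma hT (a s : ℝ) : HasDerivAt (Ts a) (a * (Vs a s * Vs a s)) s := by
  have h := (hasDerivAt_sinh_as a s).div (hasDerivAt_cosh_as a s) (cosh_as_ne a s)
  have hfun : (fun s => Real.sinh (a * s) / Real.cosh (a * s)) = Ts a := by
    funext x; rw [Ts, Real.tanh_eq_sinh_div_cosh]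
  have hkey := Real.cosh_sq_sub_sinh_sq (a * s)
  have hval : (a * Real.cosh (a * s) * Real.cosh (a * s)
      - Real.sinh (a * s) * (a * Real.sinh (a * s))) / Real.cosh (a * s) ^ 2
      = a * (Vs a s * Vs a s) := by
    rw [Vs]
    field_simp
    linear_combination a * hkey
  rw [hval] at h
  rw [← hfun]
  exact h

lemma hpy (a s : ℝ) : Ts a s ^ 2 = 1 - Vs a s ^ 2 := by
  have hkey := Real.cosh_sq_sub_sinh_sq (a * s)
  have hne := cosh_as_ne a s
  rw [Ts, Vs, Real.tanh_eq_sinh_div_cosh]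
  field_simp
  linarith

def g1 (a s : ℝ) : ℝ := a^2 * (Ts a s * (-Vs a s))
def g2 (a s : ℝ) : ℝ := a^3 * (Vs a s - 2 * Vs a s^3)
def g3 (a s : ℝ) : ℝ := a^4 * (Ts a s * (-Vs a s + 6 * Vs a s^3))
def g4 (a s : ℝ) : ℝ := a^5 * (Vs a s - 20 * Vs a s^3 + 24 * Vs a s^5)
def g5 (a s : ℝ) : ℝ := a^6 * (Ts a s * (-Vs a s + 60 * Vs a s^3 - 120 * Vs a s^5))
def g6 (a s : ℝ) : ℝ := a^7 * (Vs a s - 182 * Vs a s^3 + 840 * Vs a s^5 - 720 * Vs a s^7)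
def g7 (a s : ℝ) : ℝ :=
  a^8 * (Ts a s * (-Vs a s + 546 * Vs a s^3 - 4200 * Vs a s^5 + 5040 * Vs a s^7))
def g8 (a s : ℝ) : ℝ :=
  a^9 * (Vs a s - 1640 * Vs a s^3 + 23184 * Vs a s^5 - 60480 * Vs a s^7 + 40320 * Vs a s^9)

lemma hg1 (a s : ℝ) : HasDerivAt (fun s => a * Vs a s) (g1 a s) s := by
  have h := (hV a s).const_mul a
  refine h.congr_deriv (Eq.symm ?_)
  rw [g1]; ring

lemma hg2 (a s : ℝ) : HasDerivAt (g1 a) (g2 a s) s := by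
  have h := (((hT a s).mul ((hV a s).neg)).const_mul (a^2))
  refine h.congr_deriv (Eq.symm ?_)
  rw [g2]
  simp only [Pi.neg_apply, Pi.add_apply, Pi.sub_apply, Pi.pow_apply]
  linear_combination (-(a^3) * Vs a s) * hpy a s

lemma hg3 (a s : ℝ) : HasDerivAt (g2 a) (g3 a s) s := by
  have h := (((hV a s).sub (((hV a s).pow 3).const_mul 2)).const_mul (a^3))
  refine h.congr_deriv (Eq.symm ?_)
  rw [g3]; ring

lemma hg4 (a s : ℝ) : HasDerivAt (g3 a) (g4 a s) s := by
  have h := (((hT a s).mul (((hV a s).neg).add (((hV a s).pow 3).const_mul 6))).const_mul (a^4))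
  refine h.congr_deriv (Eq.symm ?_)
  rw [g4]
  simp only [Pi.neg_apply, Pi.add_apply, Pi.sub_apply, Pi.pow_apply]
  linear_combination (-(a^5) * Vs a s + 18 * a^5 * Vs a s^3) * hpy a s

lemma hg5 (a s : ℝ) : HasDerivAt (g4 a) (g5 a s) s := by
  have h := ((((hV a s).sub (((hV a s).pow 3).const_mul 20)).add
      (((hV a s).pow 5).const_mul 24)).const_mul (a^5))
  refine h.congr_deriv (Eq.symm ?_)
  rw [g5]; ring

lemma hg6 (a s : ℝ) : HasDerivAt (g5 a) (g6 a s) s := by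
  have h := (((hT a s).mul ((((hV a s).neg).add (((hV a s).pow 3).const_mul 60)).sub
      (((hV a s).pow 5).const_mul 120))).const_mul (a^6))
  refine h.congr_deriv (Eq.symm ?_)
  rw [g6]
  simp only [Pi.neg_apply, Pi.add_apply, Pi.sub_apply, Pi.pow_apply]
  linear_combination
    (-(a^7) * Vs a s + 180 * a^7 * Vs a s^3 - 600 * a^7 * Vs a s^5) * hpy a s

lemma hg7 (a s : ℝ) : HasDerivAt (g6 a) (g7 a s) s := by
  have h := (((((hV a s).sub (((hV a s).pow 3).const_mul 182)).add
      (((hV a s).pow 5).const_mul 840)).sub (((hV a s).pow 7).const_mul 720)).const_mul (a^7))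
  refine h.congr_deriv (Eq.symm ?_)
  rw [g7]; ring

lemma hg8 (a s : ℝ) : HasDerivAt (g7 a) (g8 a s) s := by
  have h := (((hT a s).mul (((((hV a s).neg).add (((hV a s).pow 3).const_mul 546)).sub
      (((hV a s).pow 5).const_mul 4200)).add (((hV a s).pow 7).const_mul 5040))).const_mul (a^8))
  refine h.congr_deriv (Eq.symm ?_)
  rw [g8]
  simp only [Pi.neg_apply, Pi.add_apply, Pi.sub_apply, Pi.pow_apply]
  linear_combination
    (-(a^9) * Vs a s + 1638 * a^9 * Vs a s^3 - 21000 * a^9 * Vs a s^5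
      + 35280 * a^9 * Vs a s^7) * hpy a s

theorem soliton_stationary_equations (c : ℝ) (hc : 0 < c) :
    (∀ s : ℝ, iteratedDeriv 2 (Q c) s - c * Q c s + 2 * (Q c s)^3 = 0) ∧
    (∀ s : ℝ, iteratedDeriv 4 (Q c) s - c^2 * Q c s + f5 (Q c) s = 0) ∧
    (∀ s : ℝ, iteratedDeriv 6 (Q c) s - c^3 * Q c s + f7 (Q c) s = 0) ∧
    (∀ s : ℝ, iteratedDeriv 8 (Q c) s - c^4 * Q c s + f9 (Q c) s = 0) := by
  set a := Real.sqrt c with ha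
  have ha2 : a ^ 2 = c := Real.sq_sqrt hc.le
  have hQfun : Q c = fun s => a * Vs a s := by
    funext s
    rw [Q, Vs, div_eq_mul_inv]
  have e1 : deriv (Q c) = g1 a := by
    funext s
    exact HasDerivAt.deriv (by rw [hQfun]; exact hg1 a s)
  have e2 : iteratedDeriv 2 (Q c) = g2 a := by
    rw [iteratedDeriv_succ, iteratedDeriv_one, e1]
    exact funext fun s => (hg2 a s).deriv
  have e3 : iteratedDeriv 3 (Q c) = g3 a := by
    rw [iteratedDeriv_succ, e2]
    exact funext fun s => (hg3 a s).deriv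
  have e4 : iteratedDeriv 4 (Q c) = g4 a := by
    rw [iteratedDeriv_succ, e3]
    exact funext fun s => (hg4 a s).deriv
  have e5 : iteratedDeriv 5 (Q c) = g5 a := by
    rw [iteratedDeriv_succ, e4]
    exact funext fun s => (hg5 a s).deriv
  have e6 : iteratedDeriv 6 (Q c) = g6 a := by
    rw [iteratedDeriv_succ, e5]
    exact funext fun s => (hg6 a s).deriv
  have e7 : iteratedDeriv 7 (Q c) = g7 a := by
    rw [iteratedDeriv_succ, e6]
    exact funext fun s => (hg7 a s).deriv
  have e8 : iteratedDeriv 8 (Q c) = g8 a := by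
    rw [iteratedDeriv_succ, e7]
    exact funext fun s => (hg8 a s).deriv
  refine ⟨fun s => ?_, fun s => ?_, fun s => ?_, fun s => ?_⟩
  · rw [e2, hQfun, ← ha2, g2]
    ring
  · rw [f5, e4, e2, e1, hQfun, ← ha2, g4, g2, g1]
    simp only
    linear_combination (10 * a^5 * Vs a s^3) * hpy a s
  · rw [f7, e6, e4, e3, e2, e1, hQfun, ← ha2, g6, g4, g3, g2, g1]
    simp only
    linear_combination (126 * a^7 * Vs a s^3 - 336 * a^7 * Vs a s^5) * hpy a s
  · rw [f9, e8, e6, e5, e4, e3, e2, e1, hQfun, ← ha2, g8, g6, g5, g4, g3, g2, g1]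
    simp only
    linear_combination
      (1212 * a^9 * Vs a s^3 - 13470 * a^9 * Vs a s^5
        + 798 * a^9 * Vs a s^5 * Ts a s^2 + 20238 * a^9 * Vs a s^7) * hpy a s
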